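/- arXiv:2301.08471 — 10 statements merged into one kernel-verified Lean document; each statement's English description precedes it below -/
import Mathlib

section
/- Let X be a complex Hilbert space and A, T bounded linear operators on X. Suppose there exists δ > 0 such that Re⟨A x, T x⟩ ≥ (-1 + δ)·‖A x‖·‖T x‖ for all x with A x ≠ 0 and T x ≠ 0. Then there exists c > 0 such that ‖A x + t·T x‖ ≥ c·‖A x‖ for all x ∈ X and all t ≥ 0. -/
open scoped InnerProductSpace

/-!
If `Re⟪u, v⟫ ≥ -(1 - δ)‖u‖‖v‖` with `0 ≤ δ ≤ 1`, then
`‖u + v‖² ≥ ‖u‖² + ‖v‖² - 2(1 - δ)‖u‖‖v‖ = (1 - δ)(‖u‖ - ‖v‖)² + δ(‖u‖² + ‖v‖²) ≥ δ‖u‖²`.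
The angle condition is invariant under scaling `v` by `t ≥ 0`, so this applies to
`u = A x`, `v = t • T x`, giving `c = √(min δ 1)`.
-/

section AngleCondition

variable {𝕜 E : Type*} [RCLike 𝕜] [NormedAddCommGroup E] [InnerProductSpace 𝕜 E]

lemma neg_one_add_mul_le_re_inner_of_ne_zero {u v : E} {δ : ℝ}
    (h : u ≠ 0 → v ≠ 0 → (-1 + δ) * (‖u‖ * ‖v‖) ≤ RCLike.re ⟪u, v⟫_𝕜) :
    (-1 + δ) * (‖u‖ * ‖v‖) ≤ RCLike.re ⟪u, v⟫_𝕜 := by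
  by_cases hu : u = 0
  · simp [hu]
  by_cases hv : v = 0
  · simp [hv]
  exact h hu hv

lemma neg_one_add_mul_le_re_inner_smul {u v : E} {δ t : ℝ} (ht : 0 ≤ t)
    (h : (-1 + δ) * (‖u‖ * ‖v‖) ≤ RCLike.re ⟪u, v⟫_𝕜) :
    (-1 + δ) * (‖u‖ * ‖(t : 𝕜) • v‖) ≤ RCLike.re ⟪u, (t : 𝕜) • v⟫_𝕜 := by
  rw [inner_smul_right, RCLike.re_ofReal_mul, norm_smul, RCLike.norm_ofReal, abs_of_nonneg ht]
  nlinarith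

lemma mul_norm_sq_le_norm_add_sq {u v : E} {δ : ℝ} (hδ₀ : 0 ≤ δ) (hδ₁ : δ ≤ 1)
    (h : (-1 + δ) * (‖u‖ * ‖v‖) ≤ RCLike.re ⟪u, v⟫_𝕜) :
    δ * ‖u‖ ^ 2 ≤ ‖u + v‖ ^ 2 := by
  rw [@norm_add_sq 𝕜]
  nlinarith [mul_nonneg (sub_nonneg.2 hδ₁) (sq_nonneg (‖u‖ - ‖v‖)),
    mul_nonneg hδ₀ (sq_nonneg ‖v‖)]

lemma sqrt_mul_norm_le_norm_add {u v : E} {δ : ℝ} (hδ₀ : 0 ≤ δ) (hδ₁ : δ ≤ 1)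
    (h : (-1 + δ) * (‖u‖ * ‖v‖) ≤ RCLike.re ⟪u, v⟫_𝕜) :
    √δ * ‖u‖ ≤ ‖u + v‖ := by
  refine (pow_le_pow_iff_left₀ (by positivity) (norm_nonneg _) two_ne_zero).1 ?_
  rw [mul_pow, Real.sq_sqrt hδ₀]
  exact mul_norm_sq_le_norm_add_sq hδ₀ hδ₁ h

end AngleCondition

theorem stmt_0_general {X : Type*} [NormedAddCommGroup X] [InnerProductSpace ℂ X]
    (A T : X →L[ℂ] X) (δ : ℝ) (hδ : 0 < δ)
    (h : ∀ x : X, A x ≠ 0 → T x ≠ 0 →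
      (-1 + δ) * (‖A x‖ * ‖T x‖) ≤ (⟪A x, T x⟫_ℂ).re) :
    ∃ c > (0 : ℝ), ∀ x : X, ∀ t : ℝ, 0 ≤ t →
      c * ‖A x‖ ≤ ‖A x + (t : ℂ) • T x‖ := by
  refine ⟨√(min δ 1), by positivity, fun x t ht => ?_⟩
  have hx := neg_one_add_mul_le_re_inner_of_ne_zero (𝕜 := ℂ) (h x)
  have hmin : (-1 + min δ 1) * (‖A x‖ * ‖T x‖) ≤ (⟪A x, T x⟫_ℂ).re :=
    le_trans (by gcongr; exact min_le_left _ _) hx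
  exact sqrt_mul_norm_le_norm_add (by positivity) (min_le_right _ _)
    (neg_one_add_mul_le_re_inner_smul ht hmin)

theorem stmt_0 {X : Type*} [NormedAddCommGroup X] [InnerProductSpace ℂ X] [CompleteSpace X]
    (A T : X →L[ℂ] X) (δ : ℝ) (hδ : 0 < δ)
    (h : ∀ x : X, A x ≠ 0 → T x ≠ 0 →
      (-1 + δ) * (‖A x‖ * ‖T x‖) ≤ (⟪A x, T x⟫_ℂ).re) :
    ∃ c > (0 : ℝ), ∀ x : X, ∀ t : ℝ, 0 ≤ t →
      c * ‖A x‖ ≤ ‖A x + (t : ℂ) • T x‖ :=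
  stmt_0_general A T δ hδ h
end

section
/- Let X be a complex Hilbert space and A, T bounded linear operators on X with T(ker A) = ker A. Suppose there exists δ > 0 such that Re⟨A x, T x⟩ ≥ (-1 + δ)·‖A x‖·‖T x‖ for all x with A x ≠ 0 and T x ≠ 0. Then R(A) ∩ ker(A) = {0}. -/
open scoped InnerProductSpace

/-! If `y = A x ≠ 0` lies in `ker A`, then `y = T k` for some `k ∈ ker A`, and the vectors
`z = x - s • k` all satisfy `A z = y` and `T z = T x - s • y`. As `s → ∞`, `T z` points almost
exactly opposite to `A z = y`, so the angle between `A z` and `T z` tends to `π`, contradicting the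
uniform bound `δ`. -/

theorem exists_re_inner_sub_smul_lt {𝕜 E : Type*} [RCLike 𝕜] [NormedAddCommGroup E]
    [InnerProductSpace 𝕜 E] {u : E} (hu : u ≠ 0) (v : E) {δ : ℝ} (hδ : 0 < δ) :
    ∃ s : ℝ, RCLike.re ⟪u, v - (s : 𝕜) • u⟫_𝕜 < (-1 + δ) * (‖u‖ * ‖v - (s : 𝕜) • u‖) := by
  suffices key : ∀ δ : ℝ, 0 < δ → δ ≤ 1 →
      ∃ s : ℝ, RCLike.re ⟪u, v - (s : 𝕜) • u⟫_𝕜 < (-1 + δ) * (‖u‖ * ‖v - (s : 𝕜) • u‖) by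
    obtain ⟨s, hs⟩ := key (min δ 1) (lt_min hδ one_pos) (min_le_right δ 1)
    refine ⟨s, hs.trans_le (mul_le_mul_of_nonneg_right ?_ (by positivity))⟩
    linarith [min_le_left δ 1]
  intro δ hδ hδ1
  have hu₀ : 0 < ‖u‖ := norm_pos_iff.mpr hu
  -- any `s` with `s * δ * ‖u‖ ^ 2 > (2 - δ) * ‖u‖ * ‖v‖` works
  set s : ℝ := 2 * ‖v‖ / (δ * ‖u‖) + 1 with hs_def
  have hs₀ : 0 ≤ s := by positivity
  have hs : s * δ * ‖u‖ ^ 2 = 2 * ‖u‖ * ‖v‖ + δ * ‖u‖ ^ 2 := by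
    rw [hs_def]; field_simp
  have hinner : RCLike.re ⟪u, v - (s : 𝕜) • u⟫_𝕜 = RCLike.re ⟪u, v⟫_𝕜 - s * ‖u‖ ^ 2 := by
    rw [inner_sub_right, inner_smul_right, inner_self_eq_norm_sq_to_K, map_sub,
      ← RCLike.ofReal_pow, ← RCLike.ofReal_mul, RCLike.ofReal_re]
  have hnorm : ‖v - (s : 𝕜) • u‖ ≤ ‖v‖ + s * ‖u‖ := by
    calc ‖v - (s : 𝕜) • u‖ ≤ ‖v‖ + ‖(s : 𝕜) • u‖ := norm_sub_le _ _
      _ = ‖v‖ + s * ‖u‖ := by rw [norm_smul, RCLike.norm_ofReal, abs_of_nonneg hs₀]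
  refine ⟨s, ?_⟩
  calc RCLike.re ⟪u, v - (s : 𝕜) • u⟫_𝕜 ≤ ‖u‖ * ‖v‖ - s * ‖u‖ ^ 2 := by
        rw [hinner]; linarith [re_inner_le_norm (𝕜 := 𝕜) u v]
    _ < (-1 + δ) * (‖u‖ * (‖v‖ + s * ‖u‖)) := by
        have : 0 ≤ δ * ‖u‖ * ‖v‖ := by positivity
        have : 0 < δ * ‖u‖ ^ 2 := by positivity
        linarith
    _ ≤ (-1 + δ) * (‖u‖ * ‖v - (s : 𝕜) • u‖) :=
        mul_le_mul_of_nonpos_left (mul_le_mul_of_nonneg_left hnorm hu₀.le) (by linarith)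

theorem stmt_4_general {X : Type*} [NormedAddCommGroup X] [InnerProductSpace ℂ X]
    (A T : X →L[ℂ] X)
    (hker : T '' (LinearMap.ker (A : X →ₗ[ℂ] X) : Set X) = (LinearMap.ker (A : X →ₗ[ℂ] X) : Set X))
    (δ : ℝ) (hδ : 0 < δ)
    (h : ∀ x : X, A x ≠ 0 → T x ≠ 0 →
      (-1 + δ) * (‖A x‖ * ‖T x‖) ≤ (⟪A x, T x⟫_ℂ).re) :
    LinearMap.range (A : X →ₗ[ℂ] X) ⊓ LinearMap.ker (A : X →ₗ[ℂ] X) = ⊥ := by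
  refine (Submodule.eq_bot_iff _).mpr ?_
  rintro _ ⟨⟨x, rfl⟩, hAAx⟩
  by_contra hAx
  obtain ⟨k, hk, hTk⟩ : A x ∈ T '' (LinearMap.ker (A : X →ₗ[ℂ] X) : Set X) := by rwa [hker]
  obtain ⟨s, hs⟩ : ∃ s : ℝ,
      (⟪A x, T x - (s : ℂ) • A x⟫_ℂ).re < (-1 + δ) * (‖A x‖ * ‖T x - (s : ℂ) • A x‖) :=
    exists_re_inner_sub_smul_lt (𝕜 := ℂ) (u := A x) hAx (T x) hδ
  have hAz : A (x - (s : ℂ) • k) = A x := by simp [show A k = 0 from hk]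
  have hTz : T (x - (s : ℂ) • k) = T x - (s : ℂ) • A x := by simp [hTk]
  have hTz₀ : T (x - (s : ℂ) • k) ≠ 0 := by
    rw [hTz]
    intro hw
    rw [hw, inner_zero_right, norm_zero] at hs
    simp at hs
  have hangle := h _ (by rwa [hAz]) hTz₀
  rw [hAz, hTz] at hangle
  exact (hangle.trans_lt hs).false

theorem stmt_4 {X : Type*} [NormedAddCommGroup X] [InnerProductSpace ℂ X] [CompleteSpace X]
    (A T : X →L[ℂ] X)
    (hker : T '' (LinearMap.ker (A : X →ₗ[ℂ] X) : Set X) = (LinearMap.ker (A : X →ₗ[ℂ] X) : Set X))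
    (δ : ℝ) (hδ : 0 < δ)
    (h : ∀ x : X, A x ≠ 0 → T x ≠ 0 →
      (-1 + δ) * (‖A x‖ * ‖T x‖) ≤ (⟪A x, T x⟫_ℂ).re) :
    LinearMap.range (A : X →ₗ[ℂ] X) ⊓ LinearMap.ker (A : X →ₗ[ℂ] X) = ⊥ :=
  stmt_4_general A T hker δ hδ h
end

section
/- Let X be a complex Hilbert space and A, T bounded linear operators on X with T(ker A) = ker A. Suppose there exists c > 0 such that ‖A x + t·T x‖ ≥ c·‖A x‖ for all x ∈ X and all t ≥ 0. Then ‖A x + T y‖ ≥ c·‖A x‖ for all x ∈ X and all y ∈ ker A; consequently R(A) + ker(A) is a closed subspace and R(A) ∩ ker(A) = {0}, provided R(A) is closed. -/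
/-! For `y ∈ ker A`, apply the estimate to `x + t⁻¹ • y`: since `A` kills `y`, this gives
`c‖Ax‖ ≤ ‖Ax + t • Tx + Ty‖`, and `t → 0⁺` yields `c‖Ax‖ ≤ ‖Ax + Ty‖`. As `T` maps `ker A` onto
itself, this reads `c‖a‖ ≤ ‖a + z‖` for `a ∈ R(A)`, `z ∈ ker A`. Taking `z = -a` gives
`R(A) ∩ ker A = 0`, and the same bound makes `(a, z) ↦ a + z` antilipschitz on the Banach space
`R(A) × ker A`, so its range `R(A) + ker A` is closed. -/

open Filter Topology

theorem mul_norm_le_norm_add_of_apply_eq_zero {E F : Type*} [NormedAddCommGroup E]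
    [NormedSpace ℂ E] [NormedAddCommGroup F] [NormedSpace ℂ F] (A : E →ₗ[ℂ] F) (T : E →L[ℂ] F)
    {c : ℝ} (hest : ∀ x : E, ∀ t : ℝ, 0 < t → c * ‖A x‖ ≤ ‖A x + (t : ℂ) • T x‖)
    (x : E) {y : E} (hy : A y = 0) : c * ‖A x‖ ≤ ‖A x + T y‖ := by
  have hlim : Tendsto (fun t : ℝ => ‖A x + (t : ℂ) • T x + T y‖) (𝓝[>] 0) (𝓝 ‖A x + T y‖) := by
    have hcont : Continuous fun t : ℝ => ‖A x + (t : ℂ) • T x + T y‖ := by fun_prop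
    simpa using (hcont.tendsto 0).mono_left nhdsWithin_le_nhds
  refine ge_of_tendsto hlim (eventually_nhdsWithin_of_forall fun t (ht : 0 < t) => ?_)
  have ht0 : (t : ℂ) ≠ 0 := by exact_mod_cast ht.ne'
  simpa [hy, smul_smul, ht0, add_assoc] using hest (x + (t : ℂ)⁻¹ • y) t ht

theorem Submodule.disjoint_of_mul_norm_le_norm_add {R E : Type*} [Ring R] [NormedAddCommGroup E]
    [Module R E] {U V : Submodule R E} {c : ℝ} (hc : 0 < c)
    (h : ∀ u ∈ U, ∀ v ∈ V, c * ‖u‖ ≤ ‖u + v‖) : Disjoint U V := by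
  refine Submodule.disjoint_def.mpr fun u hu hv => norm_eq_zero.mp ?_
  have := h u hu (-u) (neg_mem hv)
  rw [add_neg_cancel, norm_zero] at this
  exact le_antisymm (nonpos_of_mul_nonpos_right this hc) (norm_nonneg u)

theorem Submodule.isClosed_sup_of_mul_norm_le_norm_add {𝕜 E : Type*} [NormedField 𝕜]
    [NormedAddCommGroup E] [NormedSpace 𝕜 E] [CompleteSpace E] {U V : Submodule 𝕜 E}
    (hU : IsClosed (U : Set E)) (hV : IsClosed (V : Set E)) {c : ℝ} (hc : 0 < c)
    (h : ∀ u ∈ U, ∀ v ∈ V, c * ‖u‖ ≤ ‖u + v‖) : IsClosed ((U ⊔ V : Submodule 𝕜 E) : Set E) := by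
  have := hU.completeSpace_coe
  have := hV.completeSpace_coe
  let S : U × V →L[𝕜] E := U.subtypeL.coprod V.subtypeL
  have hS : AntilipschitzWith (1 + c⁻¹).toNNReal S := by
    refine S.antilipschitz_of_bound fun ⟨u, v⟩ => ?_
    have hu : ‖u‖ ≤ c⁻¹ * ‖(u + v : E)‖ := by
      rw [le_inv_mul_iff₀ hc]; exact h u u.2 v v.2
    have hv : ‖v‖ ≤ ‖(u + v : E)‖ + ‖u‖ := by
      simpa using norm_sub_le (u + v : E) u
    simp only [Real.coe_toNNReal _ (by positivity : 0 ≤ 1 + c⁻¹), Prod.norm_def, S,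
      ContinuousLinearMap.coprod_apply, Submodule.subtypeL_apply, max_le_iff]
    constructor <;> nlinarith [norm_nonneg (u : E), norm_nonneg (u + v : E), inv_pos.mpr hc]
  have hrange := hS.isClosed_range S.uniformContinuous
  rwa [Submodule.sup_eq_range]

theorem stmt_5 {X : Type*} [NormedAddCommGroup X] [InnerProductSpace ℂ X] [CompleteSpace X]
    (A T : X →L[ℂ] X)
    (hker : T '' (LinearMap.ker (A : X →ₗ[ℂ] X) : Set X) = (LinearMap.ker (A : X →ₗ[ℂ] X) : Set X))
    (c : ℝ) (hc : 0 < c)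
    (hest : ∀ x : X, ∀ t : ℝ, 0 ≤ t → c * ‖A x‖ ≤ ‖A x + (t : ℂ) • T x‖)
    (hcl : IsClosed (LinearMap.range (A : X →ₗ[ℂ] X) : Set X)) :
    (∀ x : X, ∀ y ∈ LinearMap.ker (A : X →ₗ[ℂ] X), c * ‖A x‖ ≤ ‖A x + T y‖) ∧
      IsClosed ((LinearMap.range (A : X →ₗ[ℂ] X) ⊔ LinearMap.ker (A : X →ₗ[ℂ] X) : Submodule ℂ X) : Set X) ∧
      LinearMap.range (A : X →ₗ[ℂ] X) ⊓ LinearMap.ker (A : X →ₗ[ℂ] X) = ⊥ := by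
  have hAT : ∀ x : X, ∀ y ∈ LinearMap.ker (A : X →ₗ[ℂ] X), c * ‖A x‖ ≤ ‖A x + T y‖ :=
    fun x _ hy => mul_norm_le_norm_add_of_apply_eq_zero (A : X →ₗ[ℂ] X) T
      (fun x t ht => hest x t ht.le) x (LinearMap.mem_ker.mp hy)
  have hsum : ∀ a ∈ LinearMap.range (A : X →ₗ[ℂ] X), ∀ z ∈ LinearMap.ker (A : X →ₗ[ℂ] X),
      c * ‖a‖ ≤ ‖a + z‖ := by
    rintro _ ⟨x, rfl⟩ z hz
    obtain ⟨y, hy, rfl⟩ : z ∈ T '' (LinearMap.ker (A : X →ₗ[ℂ] X) : Set X) := hker.ge hz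
    exact hAT x y hy
  exact ⟨hAT, Submodule.isClosed_sup_of_mul_norm_le_norm_add hcl A.isClosed_ker hc hsum,
    disjoint_iff.mp (Submodule.disjoint_of_mul_norm_le_norm_add hc hsum)⟩
end

section
/- Let X be a Banach space and A a bounded linear operator on X such that R(A) ∩ ker(A) = {0}. Then R(A) + ker(A) is closed if and only if R(A²) is closed. -/
/-!
Everything rests on the identity `A⁻¹(R(A²)) = R(A) + ker A`, which gives one direction by
continuity of `A`. For the other, suppose `R(A) + ker A` is closed. The map `(x, n) ↦ A x + n`
from `X × ker A` onto it is open by the open mapping theorem, and by disjointness it pulls `R(A)`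
back to the closed set `X × {0}`; hence `R(A)` is closed. Then `A : X → R(A)` is an open
surjection, so `R(A²) ⊆ R(A)` is closed because its preimage `R(A) + ker A` is.
-/

open Topology

section

variable {𝕜 E F : Type*} [NontriviallyNormedField 𝕜]
  [NormedAddCommGroup E] [NormedSpace 𝕜 E] [CompleteSpace E]
  [NormedAddCommGroup F] [NormedSpace 𝕜 F] [CompleteSpace F]

theorem ContinuousLinearMap.isClosed_of_isClosed_preimage_of_subset_range (T : E →L[𝕜] F)
    (hT : IsClosed (LinearMap.range (T : E →ₗ[𝕜] F) : Set F)) {S : Set F}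
    (hS : S ⊆ LinearMap.range (T : E →ₗ[𝕜] F)) (h : IsClosed (T ⁻¹' S)) : IsClosed S := by
  have : CompleteSpace (LinearMap.range (T : E →ₗ[𝕜] F)) := hT.completeSpace_coe
  have hsurj : Function.Surjective T.rangeRestrict := LinearMap.surjective_rangeRestrict _
  have hquot : IsQuotientMap T.rangeRestrict :=
    (T.rangeRestrict.isOpenMap hsurj).isQuotientMap T.rangeRestrict.continuous hsurj
  have hSR : IsClosed ((↑) ⁻¹' S : Set (LinearMap.range (T : E →ₗ[𝕜] F))) :=
    hquot.isCoinducing.isClosed_preimage.mp h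
  have himage := hT.isClosedEmbedding_subtypeVal.isClosedMap _ hSR
  convert himage using 1
  exact (Set.image_preimage_eq_of_subset (by rwa [Subtype.range_coe])).symm

theorem ContinuousLinearMap.isClosed_range_of_isClosed_sup (T : E →L[𝕜] F) {N : Submodule 𝕜 F}
    (hN : IsClosed (N : Set F)) (hdisj : Disjoint (LinearMap.range (T : E →ₗ[𝕜] F)) N)
    (hsup : IsClosed ((LinearMap.range (T : E →ₗ[𝕜] F) ⊔ N : Submodule 𝕜 F) : Set F)) :
    IsClosed (LinearMap.range (T : E →ₗ[𝕜] F) : Set F) := by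
  have : CompleteSpace N := hN.completeSpace_coe
  let Ψ : E × N →L[𝕜] F := T.coprod N.subtypeL
  have hrange : LinearMap.range (Ψ : E × N →ₗ[𝕜] F) = LinearMap.range (T : E →ₗ[𝕜] F) ⊔ N := by
    rw [ContinuousLinearMap.coe_coprod, LinearMap.range_coprod, Submodule.toLinearMap_subtypeL,
      Submodule.range_subtype]
  have hpre : Ψ ⁻¹' LinearMap.range (T : E →ₗ[𝕜] F) = {p | p.2 = 0} := by
    ext ⟨x, n⟩
    have hn : (n : F) ∈ LinearMap.range (T : E →ₗ[𝕜] F) ↔ n = 0 :=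
      ⟨fun hn ↦ Subtype.ext (Submodule.disjoint_def.mp hdisj _ hn n.2), fun hn ↦ by simp [hn]⟩
    have hTx : T x ∈ LinearMap.range (T : E →ₗ[𝕜] F) := LinearMap.mem_range_self _ x
    change T x + n ∈ LinearMap.range (T : E →ₗ[𝕜] F) ↔ n = 0
    rwa [Submodule.add_mem_iff_right _ hTx]
  refine Ψ.isClosed_of_isClosed_preimage_of_subset_range (hrange ▸ hsup) ?_ ?_
  · exact hrange ▸ SetLike.coe_subset_coe.mpr le_sup_left
  · exact hpre ▸ isClosed_eq continuous_snd continuous_const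

end

theorem LinearMap.comap_range_comp_self {R M : Type*} [Ring R] [AddCommGroup M] [Module R M]
    (f : M →ₗ[R] M) : (LinearMap.range (f ∘ₗ f)).comap f = LinearMap.range f ⊔ LinearMap.ker f := by
  rw [LinearMap.range_comp, Submodule.comap_map_eq]

theorem stmt_6 {X : Type*} [NormedAddCommGroup X] [NormedSpace ℂ X] [CompleteSpace X]
    (A : X →L[ℂ] X)
    (hdisj : LinearMap.range (A : X →ₗ[ℂ] X) ⊓ LinearMap.ker (A : X →ₗ[ℂ] X) = ⊥) :
    IsClosed ((LinearMap.range (A : X →ₗ[ℂ] X) ⊔ LinearMap.ker (A : X →ₗ[ℂ] X) : Submodule ℂ X) : Set X) ↔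
      IsClosed ((LinearMap.range ((A.comp A : X →L[ℂ] X) : X →ₗ[ℂ] X) : Submodule ℂ X) : Set X) := by
  have hpre : ((LinearMap.range (A : X →ₗ[ℂ] X) ⊔ LinearMap.ker (A : X →ₗ[ℂ] X) : Submodule ℂ X) : Set X)
      = A ⁻¹' LinearMap.range ((A.comp A : X →L[ℂ] X) : X →ₗ[ℂ] X) := by
    rw [← LinearMap.comap_range_comp_self]
    rfl
  constructor
  · intro hsup
    have hrange : IsClosed (LinearMap.range (A : X →ₗ[ℂ] X) : Set X) :=
      A.isClosed_range_of_isClosed_sup A.isClosed_ker (disjoint_iff.mpr hdisj) hsup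
    exact A.isClosed_of_isClosed_preimage_of_subset_range hrange
      (LinearMap.range_comp_le_range _ _) (hpre ▸ hsup)
  · intro hrange2
    rw [hpre]
    exact hrange2.preimage A.continuous
end

section
/- Let X be a complex Hilbert space and P a bounded projection on X (P² = P). Then inf { Re⟨P x, x⟩ / (‖P x‖·‖x‖) : P x ≠ 0, x ≠ 0 } > -1; equivalently, the angle of P with respect to the identity is strictly less than π. -/
/-!
Write `y = P x` and `z = x - P x ∈ ker P`. Since `P (y + t z) = y`, the line through `y` in the
direction `z` stays at distance at least `‖y‖ / ‖P‖` from the origin, so the quadratic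
`t ↦ ‖P‖² ‖y + t z‖² - ‖y‖²` is nonnegative; its discriminant bounds the cosine of the angle
between `y` and `z` away from `-1`, uniformly in `x`. Then `⟪y, x⟫ = ‖y‖² + ⟪y, z⟫` and
`‖z‖ ≤ ‖x‖ + ‖y‖` transfer the bound to the angle between `P x` and `x`.
-/

open scoped InnerProductSpace

theorem IsIdempotentElem.one_le_norm {R : Type*} [NonUnitalNormedRing R] {p : R}
    (hp : IsIdempotentElem p) (h0 : p ≠ 0) : 1 ≤ ‖p‖ := by
  have hpos : 0 < ‖p‖ := norm_pos_iff.mpr h0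
  have hle : ‖p‖ * 1 ≤ ‖p‖ * ‖p‖ := by simpa [hp.eq] using norm_mul_le p p
  exact le_of_mul_le_mul_left hle hpos

theorem IsIdempotentElem.norm_apply_le_mul_norm_add_smul_sub {𝕜 F : Type*}
    [NontriviallyNormedField 𝕜] [NormedAddCommGroup F] [NormedSpace 𝕜 F] {P : F →L[𝕜] F}
    (hP : IsIdempotentElem P) (x : F) (t : 𝕜) :
    ‖P x‖ ≤ ‖P‖ * ‖P x + t • (x - P x)‖ := by
  have hPx : P (P x) = P x := congrArg (· x) hP.eq
  calc ‖P x‖ = ‖P (P x + t • (x - P x))‖ := by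
        rw [map_add, map_smul, map_sub, hPx, sub_self, smul_zero, add_zero]
    _ ≤ ‖P‖ * ‖P x + t • (x - P x)‖ := P.le_opNorm _

section InnerProduct

variable {𝕜 E : Type*} [RCLike 𝕜] [NormedAddCommGroup E] [InnerProductSpace 𝕜 E]

theorem sq_mul_re_inner_sq_le_of_forall_norm_le {y z : E} {C : ℝ} (hC : 0 < C)
    (h : ∀ t : ℝ, ‖y‖ ≤ C * ‖y + (t : 𝕜) • z‖) :
    C ^ 2 * RCLike.re ⟪y, z⟫_𝕜 ^ 2 ≤ (C ^ 2 - 1) * (‖y‖ * ‖z‖) ^ 2 := by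
  set r := RCLike.re ⟪y, z⟫_𝕜
  have hquad : ∀ t : ℝ,
      0 ≤ C ^ 2 * ‖z‖ ^ 2 * (t * t) + 2 * C ^ 2 * r * t + (C ^ 2 - 1) * ‖y‖ ^ 2 := by
    intro t
    have hexp : ‖y + (t : 𝕜) • z‖ ^ 2 = ‖y‖ ^ 2 + 2 * t * r + t ^ 2 * ‖z‖ ^ 2 := by
      rw [norm_add_sq (𝕜 := 𝕜), inner_smul_right, RCLike.re_ofReal_mul, norm_smul,
        RCLike.norm_ofReal, mul_pow, sq_abs]
      ring
    have hsq : ‖y‖ ^ 2 ≤ C ^ 2 * ‖y + (t : 𝕜) • z‖ ^ 2 := by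
      rw [← mul_pow]
      exact pow_le_pow_left₀ (norm_nonneg _) (h t) 2
    nlinarith
  have hdisc := discrim_le_zero hquad
  rw [discrim] at hdisc
  have hC2 : 0 < 4 * C ^ 2 := by positivity
  nlinarith

-- `1 - 1 / (2 C²)`, the mean of `1` and `1 - 1 / C²`, dominates `√(1 - 1 / C²)` by AM-GM.
theorem neg_one_add_mul_le_re_inner_of_forall_norm_le {y z : E} {C : ℝ} (hC : 1 ≤ C)
    (h : ∀ t : ℝ, ‖y‖ ≤ C * ‖y + (t : 𝕜) • z‖) :
    (-1 + 1 / (2 * C ^ 2)) * (‖y‖ * ‖z‖) ≤ RCLike.re ⟪y, z⟫_𝕜 := by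
  have hdisc := sq_mul_re_inner_sq_le_of_forall_norm_le (by positivity) h
  have hC2 : 1 ≤ C ^ 2 := one_le_pow₀ hC
  have hc : 0 ≤ 1 - 1 / (2 * C ^ 2) := by
    rw [sub_nonneg, div_le_one (by positivity)]
    linarith
  have hmean : 1 - 1 / C ^ 2 ≤ (1 - 1 / (2 * C ^ 2)) ^ 2 := by
    have htwice : 1 / C ^ 2 = 2 * (1 / (2 * C ^ 2)) := by field_simp
    nlinarith [sq_nonneg (1 / (2 * C ^ 2))]
  have hsq : RCLike.re ⟪y, z⟫_𝕜 ^ 2 ≤ ((1 - 1 / (2 * C ^ 2)) * (‖y‖ * ‖z‖)) ^ 2 :=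
    calc RCLike.re ⟪y, z⟫_𝕜 ^ 2 ≤ (1 - 1 / C ^ 2) * (‖y‖ * ‖z‖) ^ 2 := by
          rw [one_sub_div (by positivity), div_mul_eq_mul_div, le_div_iff₀ (by positivity)]
          linarith
      _ ≤ (1 - 1 / (2 * C ^ 2)) ^ 2 * (‖y‖ * ‖z‖) ^ 2 := by gcongr
      _ = ((1 - 1 / (2 * C ^ 2)) * (‖y‖ * ‖z‖)) ^ 2 := by ring
  linarith [(abs_le_of_sq_le_sq' hsq (mul_nonneg hc (by positivity))).1]

theorem neg_one_add_mul_le_re_inner_of_le_re_inner_sub {x y : E} {δ : ℝ} (hδ0 : 0 ≤ δ)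
    (hδ1 : δ ≤ 1) (h : (-1 + δ) * (‖y‖ * ‖x - y‖) ≤ RCLike.re ⟪y, x - y⟫_𝕜) :
    (-1 + δ) * (‖y‖ * ‖x‖) ≤ RCLike.re ⟪y, x⟫_𝕜 := by
  rw [inner_sub_right, map_sub, inner_self_eq_norm_sq] at h
  have htri : ‖x - y‖ ≤ ‖x‖ + ‖y‖ := norm_sub_le x y
  nlinarith [mul_le_mul_of_nonneg_left htri (mul_nonneg (sub_nonneg.mpr hδ1) (norm_nonneg y)),
    mul_nonneg hδ0 (sq_nonneg ‖y‖)]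

end InnerProduct

theorem stmt_7_general {X : Type*} [NormedAddCommGroup X] [InnerProductSpace ℂ X]
    (P : X →L[ℂ] X) (hP : P.comp P = P) :
    ∃ δ > (0 : ℝ), ∀ x : X, P x ≠ 0 → x ≠ 0 →
      (-1 + δ) * (‖P x‖ * ‖x‖) ≤ (⟪P x, x⟫_ℂ).re := by
  have hidem : IsIdempotentElem P := hP
  by_cases hP0 : P = 0
  · exact ⟨1, one_pos, fun x hx _ => absurd (by simp [hP0]) hx⟩
  have hC := hidem.one_le_norm hP0
  have hδ : 1 / (2 * ‖P‖ ^ 2) ≤ 1 := by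
    rw [div_le_one (by positivity)]
    nlinarith
  refine ⟨1 / (2 * ‖P‖ ^ 2), by positivity, fun x _ _ => ?_⟩
  have hkernel := neg_one_add_mul_le_re_inner_of_forall_norm_le hC
    fun t : ℝ => hidem.norm_apply_le_mul_norm_add_smul_sub x (t : ℂ)
  exact neg_one_add_mul_le_re_inner_of_le_re_inner_sub (by positivity) hδ hkernel

theorem stmt_7 {X : Type*} [NormedAddCommGroup X] [InnerProductSpace ℂ X] [CompleteSpace X]
    (P : X →L[ℂ] X) (hP : P.comp P = P) :
    ∃ δ > (0 : ℝ), ∀ x : X, P x ≠ 0 → x ≠ 0 →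
      (-1 + δ) * (‖P x‖ * ‖x‖) ≤ (⟪P x, x⟫_ℂ).re :=
  stmt_7_general P hP
end

section
/- Let X be a Banach space and A a bounded linear operator on X with closed range such that X = R(A) ⊕ ker(A) (i.e. R(A) + ker(A) = X and R(A) ∩ ker(A) = {0}). Then there exist an invertible bounded operator S on X and a bounded projection P on X such that A = S∘P, S(ker A) = ker A, and S∘P = P∘S. -/
/-!
Let `P` be the projection onto `R(A)` along `ker A`; it is bounded because both summands are
closed. The operator `S = A + 1 - P` acts as `A` on `R(A)` and as the identity on `ker A`. It is
injective because `R(A) ∩ ker A = 0`, and surjective because `A` and `A ∘ P` have the same range,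
so it is invertible by the open mapping theorem. Finally `S P = A = P S`, since `A P = A = P A`.
-/

open LinearMap (ker range)
open Submodule

namespace Module.End

variable {R M : Type*} [Ring R] [AddCommGroup M] [Module R M] (f : Module.End R M)
  (h : IsCompl (range f) (ker f))

noncomputable def withIdOnKer : Module.End R M :=
  f + 1 - (range f).projection (ker f) h

variable {f}

theorem comp_projection_range_ker : f ∘ₗ (range f).projection (ker f) h = f := by
  ext x
  have hx : x - (range f).projection (ker f) h x ∈ ker f := sub_projection_mem h x
  rw [LinearMap.mem_ker, map_sub, sub_eq_zero] at hx
  exact hx.symm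

theorem projection_range_ker_comp : (range f).projection (ker f) h ∘ₗ f = f := by
  ext x
  exact projection_apply_of_mem_left h (LinearMap.mem_range_self f x)

theorem withIdOnKer_apply (x : M) :
    withIdOnKer f h x = f x + (x - (range f).projection (ker f) h x) := by
  simp only [withIdOnKer, LinearMap.sub_apply, LinearMap.add_apply, Module.End.one_apply]
  abel

theorem withIdOnKer_apply_of_mem_ker {x : M} (hx : x ∈ ker f) : withIdOnKer f h x = x := by
  rw [withIdOnKer_apply, projection_apply_of_mem_right h hx, LinearMap.mem_ker.mp hx]
  simp

theorem withIdOnKer_apply_of_mem_range {x : M} (hx : x ∈ range f) :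
    withIdOnKer f h x = f x := by
  rw [withIdOnKer_apply, projection_apply_of_mem_left h hx]
  simp

theorem withIdOnKer_mul_projection :
    withIdOnKer f h * (range f).projection (ker f) h = f := by
  ext x
  rw [Module.End.mul_apply, withIdOnKer_apply_of_mem_range h (projection_apply_mem h x)]
  exact LinearMap.congr_fun (comp_projection_range_ker h) x

theorem projection_mul_withIdOnKer :
    (range f).projection (ker f) h * withIdOnKer f h = f := by
  rw [withIdOnKer, mul_sub, mul_add, mul_one, Module.End.mul_eq_comp,
    projection_range_ker_comp h, (isIdempotentElem_projection h).eq, add_sub_cancel_right]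

theorem withIdOnKer_injective : Function.Injective (withIdOnKer f h) := by
  rw [← LinearMap.ker_eq_bot, LinearMap.ker_eq_bot']
  intro x hx
  have hfx : f x = 0 := by
    rw [withIdOnKer_apply, add_eq_zero_iff_eq_neg] at hx
    refine (Submodule.disjoint_def.mp h.disjoint) _ (LinearMap.mem_range_self f x) ?_
    rw [hx]
    exact neg_mem (sub_projection_mem h x)
  rwa [withIdOnKer_apply_of_mem_ker h hfx] at hx

theorem withIdOnKer_surjective : Function.Surjective (withIdOnKer f h) := by
  intro z
  obtain ⟨r, k, hr, hk, rfl⟩ := Submodule.codisjoint_iff_exists_add_eq.mp h.codisjoint z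
  obtain ⟨w, rfl⟩ := hr
  refine ⟨(range f).projection (ker f) h w + k, ?_⟩
  rw [map_add, ← Module.End.mul_apply, withIdOnKer_mul_projection,
    withIdOnKer_apply_of_mem_ker h hk]

theorem isUnit_withIdOnKer : IsUnit (withIdOnKer f h) :=
  (Module.End.isUnit_iff _).mpr ⟨withIdOnKer_injective h, withIdOnKer_surjective h⟩

theorem image_withIdOnKer_ker : withIdOnKer f h '' (ker f : Set M) = ker f := by
  ext z
  constructor
  · rintro ⟨x, hx, rfl⟩
    rwa [withIdOnKer_apply_of_mem_ker h hx]
  · exact fun hz ↦ ⟨z, hz, withIdOnKer_apply_of_mem_ker h hz⟩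

end Module.End

open Module.End

theorem stmt_8 {X : Type*} [NormedAddCommGroup X] [NormedSpace ℂ X] [CompleteSpace X]
    (A : X →L[ℂ] X) (hcl : IsClosed (LinearMap.range (A : X →ₗ[ℂ] X) : Set X))
    (hsum : LinearMap.range (A : X →ₗ[ℂ] X) ⊔ LinearMap.ker (A : X →ₗ[ℂ] X) = ⊤)
    (hdisj : LinearMap.range (A : X →ₗ[ℂ] X) ⊓ LinearMap.ker (A : X →ₗ[ℂ] X) = ⊥) :
    ∃ S P : X →L[ℂ] X, IsUnit S ∧ P.comp P = P ∧ A = S.comp P ∧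
      S '' (LinearMap.ker (A : X →ₗ[ℂ] X) : Set X) = (LinearMap.ker (A : X →ₗ[ℂ] X) : Set X) ∧
      S.comp P = P.comp S := by
  have hcompl : IsCompl (range (A : X →ₗ[ℂ] X)) (ker (A : X →ₗ[ℂ] X)) :=
    ⟨disjoint_iff.mpr hdisj, codisjoint_iff.mpr hsum⟩
  have htop := hcompl.isTopCompl_of_isClosed hcl A.isClosed_ker
  set P := (range (A : X →ₗ[ℂ] X)).projectionL (ker (A : X →ₗ[ℂ] X)) htop
  -- as linear maps, `S` and `P` are `withIdOnKer A hcompl` and `projection` by definition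
  set S : X →L[ℂ] X := A + 1 - P
  refine ⟨S, P, ?_, (isIdempotentElem_projectionL htop).eq, ?_, image_withIdOnKer_ker hcompl, ?_⟩
  · rw [ContinuousLinearMap.isUnit_iff_isUnit_toLinearMap]
    exact isUnit_withIdOnKer hcompl
  · exact ContinuousLinearMap.coe_inj.mp (withIdOnKer_mul_projection hcompl).symm
  · exact ContinuousLinearMap.coe_inj.mp
      ((withIdOnKer_mul_projection hcompl).trans (projection_mul_withIdOnKer hcompl).symm)
end

section
/- Let X be a Banach space and Q a quasinilpotent bounded linear operator on X (spectral radius of Q equals 0) with Q ≠ 0 arbitrary. Then X = R(Q) ⊕ ker(Q) fails unless Q = 0; that is, if R(Q) + ker(Q) = X and R(Q) ∩ ker(Q) = {0} then Q = 0. -/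
/-!
If `X = R(Q) + ker Q`, the open mapping theorem for `(y, k) ↦ Q y + k` on `X × ker Q` gives a
constant `C` such that every `Q x` equals `Q (Q y)` with `‖y‖ ≤ C ‖x‖`. Iterating,
`Q x = Q ^ (n + 1) yₙ` with `‖yₙ‖ ≤ Cⁿ ‖x‖`, so `C ‖Q x‖ ≤ ‖Q ^ (n + 1)‖ Cⁿ⁺¹ ‖x‖`, and the right
side tends to `0` by Gelfand's formula because `Q` is quasinilpotent.
-/

open Filter Topology
open scoped NNReal

theorem spectrum.eventually_nnnorm_pow_lt_pow {A : Type*} [NormedRing A] [NormedAlgebra ℂ A]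
    [CompleteSpace A] (a : A) {r : ℝ≥0} (hr : spectralRadius ℂ a < r) :
    ∀ᶠ n : ℕ in atTop, ‖a ^ n‖₊ < r ^ n := by
  filter_upwards [(spectrum.gelfand_formula a).eventually_lt_const hr,
    eventually_ne_atTop 0] with n hn hn0
  rw [← ENNReal.coe_rpow_of_nonneg _ (by positivity), ENNReal.coe_lt_coe, one_div,
    NNReal.rpow_inv_lt_iff (by positivity), NNReal.rpow_natCast] at hn
  exact hn

theorem spectrum.tendsto_norm_pow_mul_pow_of_spectralRadius_eq_zero {A : Type*} [NormedRing A]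
    [NormedAlgebra ℂ A] [CompleteSpace A] {a : A} (ha : spectralRadius ℂ a = 0) {C : ℝ}
    (hC : 0 ≤ C) : Tendsto (fun n : ℕ ↦ ‖a ^ n‖ * C ^ n) atTop (𝓝 0) := by
  set r : ℝ≥0 := ⟨(2 * C + 1)⁻¹, by positivity⟩
  have hr : r * C ≤ 2⁻¹ := by
    change (2 * C + 1)⁻¹ * C ≤ 2⁻¹
    rw [inv_mul_le_iff₀ (by positivity)]
    linarith
  refine squeeze_zero' (.of_forall fun n ↦ by positivity) ?_
    (tendsto_pow_atTop_nhds_zero_of_lt_one (r := (2⁻¹ : ℝ)) (by norm_num) (by norm_num))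
  filter_upwards [spectrum.eventually_nnnorm_pow_lt_pow a
    (r := r) (by rw [ha]; exact_mod_cast (show (0 : ℝ) < (2 * C + 1)⁻¹ by positivity))] with n hn
  calc ‖a ^ n‖ * C ^ n ≤ (r : ℝ) ^ n * C ^ n := by gcongr; exact_mod_cast hn.le
    _ = ((r : ℝ) * C) ^ n := (mul_pow _ _ _).symm
    _ ≤ 2⁻¹ ^ n := by gcongr

namespace ContinuousLinearMap

variable {𝕜 X : Type*} [NontriviallyNormedField 𝕜] [NormedAddCommGroup X] [NormedSpace 𝕜 X]

theorem exists_apply_eq_apply_apply_norm_le [CompleteSpace X] (Q : X →L[𝕜] X)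
    (hQ : LinearMap.range (Q : X →ₗ[𝕜] X) ⊔ LinearMap.ker (Q : X →ₗ[𝕜] X) = ⊤) :
    ∃ C > 0, ∀ x, ∃ y, Q x = Q (Q y) ∧ ‖y‖ ≤ C * ‖x‖ := by
  set K := LinearMap.ker (Q : X →ₗ[𝕜] X)
  have : CompleteSpace K := Q.isClosed_ker.completeSpace_coe
  set Φ : (X × K) →L[𝕜] X := Q.comp (fst 𝕜 X K) + K.subtypeL.comp (snd 𝕜 X K)
  have hΦ : Function.Surjective Φ := fun x ↦ by
    obtain ⟨_, ⟨y, rfl⟩, k, hk, rfl⟩ := Submodule.mem_sup.mp (hQ ▸ Submodule.mem_top : x ∈ _)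
    exact ⟨(y, ⟨k, hk⟩), rfl⟩
  obtain ⟨C, hC, hpre⟩ := Φ.exists_preimage_norm_le hΦ
  refine ⟨C, hC, fun x ↦ ?_⟩
  obtain ⟨⟨y, k⟩, rfl, hy⟩ := hpre x
  have hk : Q k = 0 := k.2
  exact ⟨y, by simp [Φ, hk], (le_max_left _ _).trans hy⟩

theorem exists_apply_eq_pow_succ_apply_norm_le {Q : X →L[𝕜] X} {C : ℝ} (hC : 0 ≤ C)
    (h : ∀ x, ∃ y, Q x = Q (Q y) ∧ ‖y‖ ≤ C * ‖x‖) (n : ℕ) (x : X) :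
    ∃ y, Q x = (Q ^ (n + 1)) y ∧ ‖y‖ ≤ C ^ n * ‖x‖ := by
  induction n with
  | zero => exact ⟨x, by simp, by simp⟩
  | succ n ih =>
    obtain ⟨y, hxy, hy⟩ := ih
    obtain ⟨z, hyz, hz⟩ := h y
    refine ⟨z, ?_, ?_⟩
    · rw [hxy, pow_succ, mul_apply_eq_comp, hyz, pow_succ _ (n + 1), mul_apply_eq_comp, pow_succ,
        mul_apply_eq_comp]
    · calc ‖z‖ ≤ C * (C ^ n * ‖x‖) := hz.trans (by gcongr)
        _ = C ^ (n + 1) * ‖x‖ := by ring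

end ContinuousLinearMap

theorem stmt_10_general {X : Type*} [NormedAddCommGroup X] [NormedSpace ℂ X] [CompleteSpace X]
    (Q : X →L[ℂ] X) (hq : spectralRadius ℂ Q = 0)
    (hsum : LinearMap.range (Q : X →ₗ[ℂ] X) ⊔ LinearMap.ker (Q : X →ₗ[ℂ] X) = ⊤) :
    Q = 0 := by
  obtain ⟨C, hC, hpre⟩ := Q.exists_apply_eq_apply_apply_norm_le hsum
  ext x
  have hbound : ∀ n : ℕ, C * ‖Q x‖ ≤ ‖Q ^ (n + 1)‖ * C ^ (n + 1) * ‖x‖ := fun n ↦ by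
    obtain ⟨y, hxy, hy⟩ := Q.exists_apply_eq_pow_succ_apply_norm_le hC.le hpre n x
    calc C * ‖Q x‖ ≤ C * (‖Q ^ (n + 1)‖ * (C ^ n * ‖x‖)) := by
          rw [hxy]; gcongr; exact (ContinuousLinearMap.le_opNorm _ _).trans (by gcongr)
      _ = ‖Q ^ (n + 1)‖ * C ^ (n + 1) * ‖x‖ := by ring
  have hlim : Tendsto (fun n : ℕ ↦ ‖Q ^ (n + 1)‖ * C ^ (n + 1) * ‖x‖) atTop (𝓝 0) := by
    simpa using ((spectrum.tendsto_norm_pow_mul_pow_of_spectralRadius_eq_zero hq hC.le).comp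
      (tendsto_add_atTop_nat 1)).mul_const ‖x‖
  have : C * ‖Q x‖ ≤ 0 := ge_of_tendsto' hlim hbound
  exact norm_le_zero_iff.mp (nonpos_of_mul_nonpos_right this hC)

theorem stmt_10 {X : Type*} [NormedAddCommGroup X] [NormedSpace ℂ X] [CompleteSpace X]
    (Q : X →L[ℂ] X) (hq : spectralRadius ℂ Q = 0)
    (hsum : LinearMap.range (Q : X →ₗ[ℂ] X) ⊔ LinearMap.ker (Q : X →ₗ[ℂ] X) = ⊤)
    (hdisj : LinearMap.range (Q : X →ₗ[ℂ] X) ⊓ LinearMap.ker (Q : X →ₗ[ℂ] X) = ⊥) :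
    Q = 0 :=
  stmt_10_general Q hq hsum
end

section
/- Let X be a Banach space and T a bounded linear operator on X such that the sequence Tⁿ x converges for every x ∈ X as n → ∞. Then X = R(I - T) ⊕ ker(I - T): every x ∈ X decomposes uniquely as x = y + z with T y = y and z in the closure of the range of I - T, and the limit of Tⁿ x equals y. -/
/-!
If `Tⁿ x → L`, then continuity of `T` makes `L` a fixed point, and `x - L` is the limit of
`x - Tⁿ x = (I - T)(x + T x + ⋯ + Tⁿ⁻¹ x)`, hence lies in the closure of the range of `I - T`.
Uniqueness of the decomposition is forced by uniqueness of limits, since its fixed component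
must be `L`.
-/

open Filter Topology

namespace ContinuousLinearMap

theorem apply_eq_of_tendsto_pow_apply {R M : Type*} [Semiring R] [TopologicalSpace M]
    [T2Space M] [AddCommMonoid M] [Module R M] {T : M →L[R] M} {x L : M}
    (hL : Tendsto (fun n : ℕ => (T ^ n) x) atTop (𝓝 L)) : T L = L := by
  simp only [FunLike.coe_pow_eq_iterate] at hL
  exact isFixedPt_of_tendsto_iterate hL T.continuous.continuousAt

variable {R M : Type*} [Ring R] [TopologicalSpace M] [AddCommGroup M] [IsTopologicalAddGroup M]
  [Module R M]

theorem sub_pow_apply_mem_range_one_sub (T : M →L[R] M) (x : M) (n : ℕ) :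
    x - (T ^ n) x ∈ LinearMap.range ((1 - T : M →L[R] M) : M →ₗ[R] M) :=
  ⟨(∑ i ∈ Finset.range n, T ^ i) x, by
    rw [coe_coe, ← mul_apply_eq_comp, mul_neg_geom_sum]
    simp⟩

theorem sub_mem_closure_range_one_sub_of_tendsto_pow_apply {T : M →L[R] M} {x L : M}
    (hL : Tendsto (fun n : ℕ => (T ^ n) x) atTop (𝓝 L)) :
    x - L ∈ closure (LinearMap.range ((1 - T : M →L[R] M) : M →ₗ[R] M) : Set M) :=
  mem_closure_of_tendsto (tendsto_const_nhds.sub hL)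
    (Eventually.of_forall (sub_pow_apply_mem_range_one_sub T x))

end ContinuousLinearMap

theorem stmt_13_general {X : Type*} [NormedAddCommGroup X] [NormedSpace ℂ X]
    (T : X →L[ℂ] X)
    (hconv : ∀ x : X, ∃ L : X, Tendsto (fun n : ℕ => (T ^ n) x) atTop (𝓝 L)) :
    ∀ x : X, ∃! p : X × X, T p.1 = p.1 ∧
      p.2 ∈ closure (LinearMap.range ((1 - T : X →L[ℂ] X) : X →ₗ[ℂ] X) : Set X) ∧
      x = p.1 + p.2 ∧
      Tendsto (fun n : ℕ => (T ^ n) x) atTop (𝓝 p.1) := by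
  intro x
  obtain ⟨L, hL⟩ := hconv x
  refine ⟨(L, x - L), ⟨T.apply_eq_of_tendsto_pow_apply hL,
    T.sub_mem_closure_range_one_sub_of_tendsto_pow_apply hL, by simp, hL⟩, ?_⟩
  rintro ⟨y, z⟩ ⟨-, -, rfl, hy⟩
  obtain rfl : y = L := tendsto_nhds_unique hy hL
  simp

theorem stmt_13 {X : Type*} [NormedAddCommGroup X] [NormedSpace ℂ X] [CompleteSpace X]
    (T : X →L[ℂ] X)
    (hconv : ∀ x : X, ∃ L : X, Tendsto (fun n : ℕ => (T ^ n) x) atTop (𝓝 L)) :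
    ∀ x : X, ∃! p : X × X, T p.1 = p.1 ∧
      p.2 ∈ closure (LinearMap.range ((1 - T : X →L[ℂ] X) : X →ₗ[ℂ] X) : Set X) ∧
      x = p.1 + p.2 ∧
      Tendsto (fun n : ℕ => (T ^ n) x) atTop (𝓝 p.1) :=
  stmt_13_general T hconv
end

section
/- Let X be a complex Hilbert space and A a bounded operator on X with closed range such that X = R(A) ⊕ ker(A). Then there exists a bounded operator T on X with T(ker A) = ker A and A + t·T invertible for some t > 0, and δ > 0 such that Re⟨A x, T x⟩ ≥ (-1 + δ)·‖A x‖·‖T x‖ whenever A x ≠ 0 and T x ≠ 0. -/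
/-!
Take `T = P`, the projection onto `ker A` along `R(A)`; it is bounded because both subspaces are
closed. `A + P` is bijective, hence invertible by the open mapping theorem. For `x` with
`A x ≠ 0 ≠ P x`, the vectors `A x ∈ R(A)` and `P x ∈ ker A` lie in complementary closed subspaces,
and the bounded projection `Q` onto `R(A)` along `ker A` forces a uniform angle between them:
after rescaling `v ∈ ker A` to `‖v‖ = ‖u‖`, `‖u‖ = ‖Q (u + v)‖ ≤ ‖Q‖ ‖u + v‖`, and expanding
`‖u + v‖²` bounds `Re ⟪u, v⟫` away from `-‖u‖ ‖v‖`.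
-/

open scoped InnerProductSpace

theorem LinearMap.bijective_add_projection_ker {R M : Type*} [Ring R] [AddCommGroup M]
    [Module R M] (f : M →ₗ[R] M) (h : IsCompl (ker f) (range f)) :
    Function.Bijective (f + (ker f).projection (range f) h) := by
  set P := (ker f).projection (range f) h
  have hfP : ∀ x, f (P x) = 0 := fun x ↦ Submodule.projection_apply_mem h x
  have hPP : ∀ x, P (P x) = P x := fun x ↦
    Submodule.projection_apply_of_mem_left h (Submodule.projection_apply_mem h x)
  refine ⟨(injective_iff_map_eq_zero _).2 fun x hx ↦ ?_, fun y ↦ ?_⟩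
  · have hfx : f x = 0 := by
      have hmem : f x ∈ ker f := by
        rw [eq_neg_of_add_eq_zero_left hx]
        exact neg_mem (Submodule.projection_apply_mem h x)
      exact (Submodule.disjoint_def.1 h.disjoint) _ hmem ⟨x, rfl⟩
    have hPx : P x = 0 := by simpa [hfx] using hx
    exact (Submodule.disjoint_def.1 h.disjoint) x hfx
      ((Submodule.projection_apply_eq_zero_iff h).1 hPx)
  · obtain ⟨w, hw⟩ : y - P y ∈ range f := by
      rw [← Submodule.projection_apply_eq_zero_iff h, map_sub, hPP, sub_self]
    refine ⟨w - P w + P y, ?_⟩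
    simp only [add_apply, map_add, map_sub, hfP, hw, hPP]
    abel

theorem neg_one_add_mul_le_re_inner_of_norm_eq {𝕜 E : Type*} [RCLike 𝕜] [NormedAddCommGroup E]
    [InnerProductSpace 𝕜 E] {C : ℝ} (hC : 0 < C) {u w : E} (huw : ‖u‖ = ‖w‖)
    (h : ‖u‖ ≤ C * ‖u + w‖) :
    (-1 + (2 * C ^ 2)⁻¹) * (‖u‖ * ‖w‖) ≤ RCLike.re ⟪u, w⟫_𝕜 := by
  have hsq : ‖u‖ ^ 2 ≤ C ^ 2 * (2 * ‖u‖ ^ 2 + 2 * RCLike.re ⟪u, w⟫_𝕜) := by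
    have := pow_le_pow_left₀ (norm_nonneg u) h 2
    rw [mul_pow, norm_add_sq (𝕜 := 𝕜), ← huw] at this
    linarith
  rw [← huw, ← sq, ← sub_nonneg]
  have : 0 ≤ (RCLike.re ⟪u, w⟫_𝕜 - (-1 + (2 * C ^ 2)⁻¹) * ‖u‖ ^ 2) * (2 * C ^ 2) := by
    field_simp
    linarith
  exact nonneg_of_mul_nonneg_left this (by positivity)

theorem Submodule.IsTopCompl.exists_pos_neg_one_add_mul_le_re_inner {𝕜 E : Type*} [RCLike 𝕜]
    [NormedAddCommGroup E] [InnerProductSpace 𝕜 E] {U V : Submodule 𝕜 E} (h : U.IsTopCompl V) :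
    ∃ δ > (0 : ℝ), ∀ u ∈ U, ∀ v ∈ V, (-1 + δ) * (‖u‖ * ‖v‖) ≤ RCLike.re ⟪u, v⟫_𝕜 := by
  set Q := U.projectionL V h
  refine ⟨(2 * (‖Q‖ + 1) ^ 2)⁻¹, by positivity, fun u hu v hv ↦ ?_⟩
  rcases eq_or_ne u 0 with rfl | hu0
  · simp
  rcases eq_or_ne v 0 with rfl | hv0
  · simp
  -- both sides are homogeneous in `v`, so `v` may be rescaled inside `V` to the length of `u`
  set c : ℝ := ‖u‖ / ‖v‖
  have hc : 0 < c := div_pos (norm_pos_iff.2 hu0) (norm_pos_iff.2 hv0)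
  have hcv : ‖(c : 𝕜) • v‖ = c * ‖v‖ := by
    rw [norm_smul, RCLike.norm_ofReal, abs_of_pos hc]
  have hbound : ‖u‖ ≤ (‖Q‖ + 1) * ‖u + (c : 𝕜) • v‖ := by
    have hQ : Q (u + (c : 𝕜) • v) = u := by
      rw [map_add, (Submodule.projectionL_eq_self_iff h u).2 hu,
        (Submodule.projectionL_apply_eq_zero_iff h).2 (V.smul_mem _ hv), add_zero]
    calc ‖u‖ = ‖Q (u + (c : 𝕜) • v)‖ := by rw [hQ]
      _ ≤ ‖Q‖ * ‖u + (c : 𝕜) • v‖ := Q.le_opNorm _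
      _ ≤ (‖Q‖ + 1) * ‖u + (c : 𝕜) • v‖ := by gcongr; linarith
  have key := neg_one_add_mul_le_re_inner_of_norm_eq (𝕜 := 𝕜) (by positivity)
    (by rw [hcv, div_mul_cancel₀ _ (norm_ne_zero_iff.2 hv0)]) hbound
  rw [hcv, inner_smul_right, RCLike.re_ofReal_mul] at key
  exact le_of_mul_le_mul_left (by linarith) hc

theorem stmt_17 {X : Type*} [NormedAddCommGroup X] [InnerProductSpace ℂ X] [CompleteSpace X]
    (A : X →L[ℂ] X) (hcl : IsClosed (LinearMap.range (A : X →ₗ[ℂ] X) : Set X))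
    (hsum : LinearMap.range (A : X →ₗ[ℂ] X) ⊔ LinearMap.ker (A : X →ₗ[ℂ] X) = ⊤)
    (hdisj : LinearMap.range (A : X →ₗ[ℂ] X) ⊓ LinearMap.ker (A : X →ₗ[ℂ] X) = ⊥) :
    ∃ T : X →L[ℂ] X, ∃ t > (0 : ℝ), ∃ δ > (0 : ℝ),
      T '' (LinearMap.ker (A : X →ₗ[ℂ] X) : Set X) = (LinearMap.ker (A : X →ₗ[ℂ] X) : Set X) ∧
      IsUnit (A + (t : ℂ) • T) ∧
      ∀ x : X, A x ≠ 0 → T x ≠ 0 →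
        (-1 + δ) * (‖A x‖ * ‖T x‖) ≤ (⟪A x, T x⟫_ℂ).re := by
  have hcompl : IsCompl (LinearMap.ker (A : X →ₗ[ℂ] X)) (LinearMap.range (A : X →ₗ[ℂ] X)) :=
    IsCompl.symm ⟨disjoint_iff.2 hdisj, codisjoint_iff.2 hsum⟩
  have htop := Submodule.IsCompl.isTopCompl_of_isClosed hcompl A.isClosed_ker hcl
  obtain ⟨δ, hδ, hangle⟩ := htop.symm.exists_pos_neg_one_add_mul_le_re_inner
  set P := (LinearMap.ker (A : X →ₗ[ℂ] X)).projectionL _ htop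
  refine ⟨P, 1, one_pos, δ, hδ, ?_, ?_,
    fun x _ _ ↦ hangle _ ⟨x, rfl⟩ _ (Submodule.projectionL_apply_mem htop x)⟩
  · exact Set.EqOn.image_eq_self fun x hx ↦ (Submodule.projectionL_eq_self_iff htop x).2 hx
  · rw [Complex.ofReal_one, one_smul, ContinuousLinearMap.isUnit_iff_bijective]
    exact (A : X →ₗ[ℂ] X).bijective_add_projection_ker hcompl
end

section
/- Let X be a complex Hilbert space and A a bounded operator on X with closed range. Suppose there exists a bounded operator T on X with T(ker A) = ker A, with A + t₀·T invertible for some t₀ > 0, and δ > 0 such that Re⟨A x, T x⟩ ≥ (-1 + δ)·‖A x‖·‖T x‖ whenever A x ≠ 0 and T x ≠ 0. Then X = R(A) ⊕ ker(A). -/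
/-!
Put `ε = min δ 1`, so that `Re ⟪A x, T x⟫ ≥ -(1 - ε) ‖A x‖ ‖T x‖` for every `x`; for two vectors
with this obtuse-angle bound, `‖a + b‖ ≥ √(ε/2) (‖a‖ + ‖b‖)`.

Since `T` maps `ker A` onto itself, testing the angle condition at `x + μ w` with `w ∈ ker A` and
`|μ| → ∞` shows that `‖⟪z, k⟫‖ ≤ (1 - ε) ‖z‖ ‖k‖` for `z ∈ R(A)`, `k ∈ ker A`. Hence
`R(A) ∩ ker A = 0` and `R(A) + ker A` is closed.

Applied to `A x` and `t T x`, the same bound shows that `A + t T` is bounded below by a multiple of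
`t` on `(0, t₀]`; perturbing the inverse from `t₀` down a geometric sequence makes `A + t T`
invertible for arbitrarily small `t > 0`. If `u ⊥ R(A) + ker A`, solve `(A + t T) x = u` and pick
`x'` with `A x' = A x`, `‖x'‖ ≤ C ‖A x‖` (open mapping on the closed range). As
`T (x - x') ∈ ker A`, `‖u‖² = t ⟪u, T x'⟫ = O(t) ‖u‖²`, so `u = 0`.
-/

open scoped InnerProductSpace
open Filter Topology

theorem sqrt_half_mul_norm_add_norm_le_norm_add {𝕜 E : Type*} [RCLike 𝕜] [NormedAddCommGroup E]
    [InnerProductSpace 𝕜 E] {ε : ℝ} (hε : ε ≤ 1) {a b : E}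
    (h : (-1 + ε) * (‖a‖ * ‖b‖) ≤ RCLike.re ⟪a, b⟫_𝕜) :
    √(ε / 2) * (‖a‖ + ‖b‖) ≤ ‖a + b‖ := by
  have hsq : ε / 2 * (‖a‖ + ‖b‖) ^ 2 ≤ ‖a + b‖ ^ 2 := by
    rw [norm_add_sq (𝕜 := 𝕜)]
    nlinarith [sq_nonneg (‖a‖ - ‖b‖), sq_nonneg (‖a‖ + ‖b‖)]
  calc √(ε / 2) * (‖a‖ + ‖b‖) = √(ε / 2 * (‖a‖ + ‖b‖) ^ 2) := by
        rw [Real.sqrt_mul' _ (by positivity), Real.sqrt_sq (by positivity)]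
    _ ≤ √(‖a + b‖ ^ 2) := Real.sqrt_le_sqrt hsq
    _ = ‖a + b‖ := Real.sqrt_sq (norm_nonneg _)

theorem Submodule.inf_eq_bot_of_mul_norm_add_norm_le {R E : Type*} [Ring R] [NormedAddCommGroup E]
    [Module R E] {U V : Submodule R E} {c : ℝ} (hc : 0 < c)
    (h : ∀ u ∈ U, ∀ v ∈ V, c * (‖u‖ + ‖v‖) ≤ ‖u + v‖) : U ⊓ V = ⊥ := by
  rw [Submodule.eq_bot_iff]
  intro z hz
  have := h z hz.1 (-z) (V.neg_mem hz.2)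
  rw [add_neg_cancel, norm_zero, norm_neg] at this
  exact norm_eq_zero.mp (by nlinarith [norm_nonneg z])

theorem Submodule.isClosed_sup_of_mul_norm_add_norm_le {𝕜 E : Type*} [NontriviallyNormedField 𝕜]
    [NormedAddCommGroup E] [NormedSpace 𝕜 E] {U V : Submodule 𝕜 E} [CompleteSpace U]
    [CompleteSpace V] {c : ℝ} (hc : 0 < c) (h : ∀ u ∈ U, ∀ v ∈ V, c * (‖u‖ + ‖v‖) ≤ ‖u + v‖) :
    IsClosed ((U ⊔ V : Submodule 𝕜 E) : Set E) := by
  let Φ : U × V →L[𝕜] E := U.subtypeL.coprod V.subtypeL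
  have hΦ : AntilipschitzWith c⁻¹.toNNReal Φ := Φ.antilipschitz_of_bound fun p => by
    rw [Real.coe_toNNReal _ (by positivity), Prod.norm_def, inv_mul_eq_div, le_div_iff₀ hc]
    calc max ‖p.1‖ ‖p.2‖ * c ≤ c * (‖(p.1 : E)‖ + ‖(p.2 : E)‖) := by
          rw [mul_comm]; gcongr; exact max_le_add_of_nonneg (norm_nonneg _) (norm_nonneg _)
      _ ≤ ‖Φ p‖ := h _ p.1.2 _ p.2.2
  have hrange : Set.range Φ = U ⊔ V := by
    rw [← ContinuousLinearMap.coe_coe, ← LinearMap.coe_range, ContinuousLinearMap.coe_coprod]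
    simp [LinearMap.range_coprod]
  exact hrange ▸ hΦ.isClosed_range Φ.uniformContinuous

namespace ContinuousLinearMap

section NormedField

variable {𝕜 E : Type*} [NontriviallyNormedField 𝕜] [NormedAddCommGroup E] [NormedSpace 𝕜 E]

theorem exists_pos_mul_norm_le_of_isUnit {U : E →L[𝕜] E} (hU : IsUnit U) :
    ∃ c > 0, ∀ x, c * ‖x‖ ≤ ‖U x‖ := by
  obtain ⟨u, rfl⟩ := hU
  refine ⟨(‖(↑u⁻¹ : E →L[𝕜] E)‖ + 1)⁻¹, by positivity, fun x => ?_⟩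
  rw [inv_mul_le_iff₀ (by positivity)]
  calc ‖x‖ = ‖(↑u⁻¹ : E →L[𝕜] E) ((u : E →L[𝕜] E) x)‖ := by
        rw [← mul_apply_eq_comp, u.inv_mul, one_apply_eq_self]
    _ ≤ ‖(↑u⁻¹ : E →L[𝕜] E)‖ * ‖(u : E →L[𝕜] E) x‖ := le_opNorm _ _
    _ ≤ (‖(↑u⁻¹ : E →L[𝕜] E)‖ + 1) * ‖(u : E →L[𝕜] E) x‖ := by gcongr; linarith

variable [CompleteSpace E]

theorem exists_preimage_norm_le_of_isClosed_range {F : Type*} [NormedAddCommGroup F]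
    [NormedSpace 𝕜 F] [CompleteSpace F] (A : E →L[𝕜] F)
    (hA : IsClosed (LinearMap.range (A : E →ₗ[𝕜] F) : Set F)) :
    ∃ C > 0, ∀ x, ∃ x', A x' = A x ∧ ‖x'‖ ≤ C * ‖A x‖ := by
  have := hA.completeSpace_coe
  obtain ⟨C, hC, hpre⟩ := A.rangeRestrict.exists_preimage_norm_le (fun y => by
    obtain ⟨x, hx⟩ := y.2
    exact ⟨x, Subtype.ext hx⟩)
  refine ⟨C, hC, fun x => ?_⟩
  obtain ⟨x', hx', hle⟩ := hpre ⟨A x, LinearMap.mem_range_self _ x⟩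
  exact ⟨x', congrArg Subtype.val hx', hle⟩

theorem isUnit_of_norm_sub_lt {U V : E →L[𝕜] E} (hU : IsUnit U) {c : ℝ}
    (hc : ∀ x, c * ‖x‖ ≤ ‖U x‖) (hUV : ‖V - U‖ < c) : IsUnit V := by
  obtain ⟨u, rfl⟩ := hU
  have hc0 : 0 < c := (norm_nonneg _).trans_lt hUV
  have hinv : ‖(↑u⁻¹ : E →L[𝕜] E)‖ ≤ c⁻¹ := opNorm_le_bound _ (by positivity) fun y => by
    rw [inv_mul_eq_div, le_div_iff₀ hc0, mul_comm]
    have := hc ((↑u⁻¹ : E →L[𝕜] E) y)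
    rwa [← mul_apply_eq_comp, u.mul_inv, one_apply_eq_self] at this
  have hsmall : ‖-((↑u⁻¹ : E →L[𝕜] E) * (V - u))‖ < 1 := by
    rw [norm_neg]
    calc ‖(↑u⁻¹ : E →L[𝕜] E) * (V - u)‖ ≤ c⁻¹ * ‖V - u‖ :=
          (norm_mul_le _ _).trans (by gcongr)
      _ < c⁻¹ * c := by gcongr
      _ = 1 := inv_mul_cancel₀ hc0.ne'
  have hV : V = u * (1 - -((↑u⁻¹ : E →L[𝕜] E) * (V - u))) := by
    rw [sub_neg_eq_add, mul_add, ← mul_assoc, u.mul_inv, mul_one, one_mul, add_sub_cancel]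
  rw [hV]
  exact u.isUnit.mul (Units.oneSub _ hsmall).isUnit

end NormedField

section RCLike

variable {𝕜 E : Type*} [RCLike 𝕜] [NormedAddCommGroup E] [NormedSpace 𝕜 E]

theorem exists_pos_mul_mul_norm_le_add_smul {A T : E →L[𝕜] E} {κ t₀ : ℝ} (hκ : 0 < κ)
    (ht₀ : 0 < t₀)
    (hκbound : ∀ t : ℝ, 0 ≤ t → ∀ x, κ * (‖A x‖ + t * ‖T x‖) ≤ ‖(A + (t : 𝕜) • T) x‖)
    (hunit : IsUnit (A + (t₀ : 𝕜) • T)) :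
    ∃ c > 0, ∀ t, 0 < t → t ≤ t₀ → ∀ x, c * t * ‖x‖ ≤ ‖(A + (t : 𝕜) • T) x‖ := by
  obtain ⟨c₀, hc₀, h₀⟩ := exists_pos_mul_norm_le_of_isUnit hunit
  refine ⟨c₀ * κ / t₀, by positivity, fun t ht htt₀ x => ?_⟩
  have hup : ‖(A + (t₀ : 𝕜) • T) x‖ ≤ ‖A x‖ + t₀ * ‖T x‖ := by
    simpa [norm_smul, abs_of_pos ht₀] using norm_add_le (A x) ((t₀ : 𝕜) • T x)
  calc c₀ * κ / t₀ * t * ‖x‖ = κ * (t / t₀) * (c₀ * ‖x‖) := by ring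
    _ ≤ κ * (t / t₀) * (‖A x‖ + t₀ * ‖T x‖) := by gcongr; exact (h₀ x).trans hup
    _ = κ * (t / t₀ * ‖A x‖ + t * ‖T x‖) := by field_simp
    _ ≤ κ * (‖A x‖ + t * ‖T x‖) := by
        gcongr; exact mul_le_of_le_one_left (norm_nonneg _) ((div_le_one ht₀).mpr htt₀)
    _ ≤ _ := hκbound t ht.le x

variable [CompleteSpace E]

theorem frequently_isUnit_add_smul {A T : E →L[𝕜] E} {c t₀ : ℝ} (hc : 0 < c) (ht₀ : 0 < t₀)
    (hbound : ∀ t, 0 < t → t ≤ t₀ → ∀ x, c * t * ‖x‖ ≤ ‖(A + (t : 𝕜) • T) x‖)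
    (hunit : IsUnit (A + (t₀ : 𝕜) • T)) : ∃ᶠ t : ℝ in 𝓝[>] 0, IsUnit (A + (t : 𝕜) • T) := by
  set ρ : ℝ := c / (2 * (‖T‖ + c))
  have hρ : 0 < ρ := by positivity
  have hρ_half : ρ ≤ 1 / 2 := by
    rw [div_le_iff₀ (by positivity)]; linarith [norm_nonneg T]
  have hρT : ρ * ‖T‖ < c := by
    rw [div_mul_eq_mul_div, div_lt_iff₀ (by positivity)]; nlinarith [norm_nonneg T]
  have hpos : ∀ n : ℕ, 0 < (1 - ρ) ^ n * t₀ := fun n => mul_pos (pow_pos (by linarith) n) ht₀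
  have hunits : ∀ n : ℕ, IsUnit (A + (((1 - ρ) ^ n * t₀ : ℝ) : 𝕜) • T) := by
    intro n
    induction n with
    | zero => simpa using hunit
    | succ n ih =>
      set t := (1 - ρ) ^ n * t₀
      have htle : t ≤ t₀ := mul_le_of_le_one_left ht₀.le (pow_le_one₀ (by linarith) (by linarith))
      refine isUnit_of_norm_sub_lt ih (hbound t (hpos n) htle) ?_
      calc ‖A + (((1 - ρ) ^ (n + 1) * t₀ : ℝ) : 𝕜) • T - (A + (t : 𝕜) • T)‖ = ρ * t * ‖T‖ := by
            rw [add_sub_add_left_eq_sub, ← sub_smul, ← RCLike.ofReal_sub, norm_smul,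
              RCLike.norm_ofReal, pow_succ,
              show (1 - ρ) ^ n * (1 - ρ) * t₀ - t = -(ρ * t) by ring, abs_neg,
              abs_of_pos (mul_pos hρ (hpos n))]
        _ < c * t := by nlinarith [hpos n]
  have hlim : Tendsto (fun n : ℕ => (1 - ρ) ^ n * t₀) atTop (𝓝[>] 0) := by
    refine tendsto_nhdsWithin_iff.mpr ⟨?_, Eventually.of_forall hpos⟩
    simpa using (tendsto_pow_atTop_nhds_zero_of_lt_one (by linarith) (by linarith)).mul_const t₀
  exact hlim.frequently (Frequently.of_forall hunits)

end RCLike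

section InnerProductSpace

variable {𝕜 X : Type*} [RCLike 𝕜] [NormedAddCommGroup X] [InnerProductSpace 𝕜 X]
  {A T : X →L[𝕜] X}

theorem neg_one_add_min_one_mul_le_re_inner {δ : ℝ}
    (h : ∀ x, A x ≠ 0 → T x ≠ 0 → (-1 + δ) * (‖A x‖ * ‖T x‖) ≤ RCLike.re ⟪A x, T x⟫_𝕜) (x : X) :
    (-1 + min δ 1) * (‖A x‖ * ‖T x‖) ≤ RCLike.re ⟪A x, T x⟫_𝕜 := by
  by_cases hAx : A x = 0
  · simp [hAx]
  by_cases hTx : T x = 0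
  · simp [hTx]
  calc (-1 + min δ 1) * (‖A x‖ * ‖T x‖) ≤ (-1 + δ) * (‖A x‖ * ‖T x‖) := by
        gcongr; exact min_le_left δ 1
    _ ≤ _ := h x hAx hTx

theorem norm_inner_le_of_mem_ker {ε : ℝ} (hε : ε ≤ 1)
    (hangle : ∀ x, (-1 + ε) * (‖A x‖ * ‖T x‖) ≤ RCLike.re ⟪A x, T x⟫_𝕜)
    (hT : (LinearMap.ker (A : X →ₗ[𝕜] X) : Set X) ⊆ T '' LinearMap.ker (A : X →ₗ[𝕜] X))
    (x : X) {k : X} (hk : k ∈ LinearMap.ker (A : X →ₗ[𝕜] X)) :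
    ‖⟪A x, k⟫_𝕜‖ ≤ (1 - ε) * (‖A x‖ * ‖k‖) := by
  obtain ⟨w, hw, rfl⟩ := hT hk
  set c := ⟪A x, T w⟫_𝕜
  set d := ‖c‖ - (1 - ε) * (‖A x‖ * ‖T w‖)
  by_contra! hlt
  have hd : 0 < d := by linarith
  have hc : c ≠ 0 := norm_pos_iff.mp ((by positivity : (0 : ℝ) ≤ (1 - ε) * _).trans_lt hlt)
  set C := RCLike.re ⟪A x, T x⟫_𝕜 + (1 - ε) * (‖A x‖ * ‖T x‖)
  have hgrow : ∀ s : ℝ, 0 ≤ s → s * d ≤ C := by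
    intro s hs
    set μ : 𝕜 := s * (-(‖c‖ : 𝕜) / c)
    have hμ : ‖μ‖ = s := by
      rw [norm_mul, norm_div, norm_neg, RCLike.norm_ofReal, RCLike.norm_ofReal, abs_norm,
        div_self (norm_ne_zero_iff.mpr hc), mul_one, abs_of_nonneg hs]
    have hμc : RCLike.re (μ * c) = -(s * ‖c‖) := by
      rw [mul_assoc, div_mul_cancel₀ _ hc, ← RCLike.ofReal_neg, ← RCLike.ofReal_mul,
        RCLike.ofReal_re, mul_neg]
    have hA : A (x + μ • w) = A x := by simp [show A w = 0 from hw]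
    have hT' : T (x + μ • w) = T x + μ • T w := by simp
    have hnorm : ‖T x + μ • T w‖ ≤ ‖T x‖ + s * ‖T w‖ := by
      simpa only [norm_smul, hμ] using norm_add_le (T x) (μ • T w)
    have := hangle (x + μ • w)
    rw [hA, hT', inner_add_right, inner_smul_right, map_add, hμc] at this
    have : (-1 + ε) * (‖A x‖ * (‖T x‖ + s * ‖T w‖)) ≤ (-1 + ε) * (‖A x‖ * ‖T x + μ • T w‖) :=
      mul_le_mul_of_nonpos_left (by gcongr) (by linarith)
    linarith
  have := hgrow ((|C| + 1) / d) (by positivity)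
  rw [div_mul_cancel₀ _ hd.ne'] at this
  linarith [le_abs_self C]

theorem sqrt_half_mul_norm_add_norm_le_of_mem_range_of_mem_ker {ε : ℝ} (hε : ε ≤ 1)
    (hangle : ∀ x, (-1 + ε) * (‖A x‖ * ‖T x‖) ≤ RCLike.re ⟪A x, T x⟫_𝕜)
    (hT : (LinearMap.ker (A : X →ₗ[𝕜] X) : Set X) ⊆ T '' LinearMap.ker (A : X →ₗ[𝕜] X))
    {z k : X} (hz : z ∈ LinearMap.range (A : X →ₗ[𝕜] X)) (hk : k ∈ LinearMap.ker (A : X →ₗ[𝕜] X)) :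
    √(ε / 2) * (‖z‖ + ‖k‖) ≤ ‖z + k‖ := by
  obtain ⟨x, rfl⟩ := hz
  rw [coe_coe]
  refine sqrt_half_mul_norm_add_norm_le_norm_add (𝕜 := 𝕜) hε ?_
  have := norm_inner_le_of_mem_ker hε hangle hT x hk
  linarith [neg_abs_le (RCLike.re ⟪A x, k⟫_𝕜), RCLike.abs_re_le_norm ⟪A x, k⟫_𝕜]

theorem sqrt_half_mul_le_norm_add_smul_apply {ε : ℝ} (hε : ε ≤ 1)
    (hangle : ∀ x, (-1 + ε) * (‖A x‖ * ‖T x‖) ≤ RCLike.re ⟪A x, T x⟫_𝕜) {t : ℝ} (ht : 0 ≤ t)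
    (x : X) : √(ε / 2) * (‖A x‖ + t * ‖T x‖) ≤ ‖(A + (t : 𝕜) • T) x‖ := by
  have hnorm : ‖(t : 𝕜) • T x‖ = t * ‖T x‖ := by
    rw [norm_smul, RCLike.norm_ofReal, abs_of_nonneg ht]
  rw [← hnorm]
  refine sqrt_half_mul_norm_add_norm_le_norm_add (𝕜 := 𝕜) hε ?_
  rw [hnorm, inner_smul_right, RCLike.re_ofReal_mul]
  nlinarith [hangle x]

theorem norm_sq_le_of_mem_orthogonal_range_sup_ker
    (hT : Set.MapsTo T (LinearMap.ker (A : X →ₗ[𝕜] X)) (LinearMap.ker (A : X →ₗ[𝕜] X))) {u : X}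
    (hu : u ∈ (LinearMap.range (A : X →ₗ[𝕜] X) ⊔ LinearMap.ker (A : X →ₗ[𝕜] X))ᗮ) {t : ℝ}
    {x x' : X} (hx : (A + (t : 𝕜) • T) x = u) (hx' : A x' = A x) :
    ‖u‖ ^ 2 ≤ |t| * ‖T‖ * ‖x'‖ * ‖u‖ := by
  have hperp : ∀ v ∈ LinearMap.range (A : X →ₗ[𝕜] X) ⊔ LinearMap.ker (A : X →ₗ[𝕜] X),
      ⟪u, v⟫_𝕜 = 0 := fun v hv => Submodule.inner_left_of_mem_orthogonal hv hu
  have hn : T (x - x') ∈ LinearMap.ker (A : X →ₗ[𝕜] X) :=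
    hT (by simp [LinearMap.mem_ker, hx'])
  have hu_eq : u = A x' + (t : 𝕜) • T x' + (t : 𝕜) • T (x - x') := by
    rw [← hx, map_sub, smul_sub, hx']; simp
  have hinner : ⟪u, u⟫_𝕜 = (t : 𝕜) * ⟪u, T x'⟫_𝕜 := by
    nth_rewrite 2 [hu_eq]
    rw [inner_add_right, inner_add_right, inner_smul_right, inner_smul_right,
      hperp (A x') (Submodule.mem_sup_left ⟨x', rfl⟩),
      hperp _ (Submodule.mem_sup_right hn), mul_zero, zero_add, add_zero]
  calc ‖u‖ ^ 2 = ‖⟪u, u⟫_𝕜‖ := by simp [inner_self_eq_norm_sq_to_K]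
    _ = |t| * ‖⟪u, T x'⟫_𝕜‖ := by rw [hinner, norm_mul, RCLike.norm_ofReal]
    _ ≤ |t| * (‖u‖ * (‖T‖ * ‖x'‖)) := by
        gcongr; exact (norm_inner_le_norm _ _).trans (by gcongr; exact T.le_opNorm x')
    _ = |t| * ‖T‖ * ‖x'‖ * ‖u‖ := by ring

theorem orthogonal_range_sup_ker_eq_bot [CompleteSpace X] {ε : ℝ} (hε0 : 0 < ε) (hε1 : ε ≤ 1)
    (hangle : ∀ x, (-1 + ε) * (‖A x‖ * ‖T x‖) ≤ RCLike.re ⟪A x, T x⟫_𝕜)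
    (hT : Set.MapsTo T (LinearMap.ker (A : X →ₗ[𝕜] X)) (LinearMap.ker (A : X →ₗ[𝕜] X)))
    (hcl : IsClosed (LinearMap.range (A : X →ₗ[𝕜] X) : Set X))
    (hfreq : ∃ᶠ t : ℝ in 𝓝[>] 0, IsUnit (A + (t : 𝕜) • T)) :
    (LinearMap.range (A : X →ₗ[𝕜] X) ⊔ LinearMap.ker (A : X →ₗ[𝕜] X))ᗮ = ⊥ := by
  rw [Submodule.eq_bot_iff]
  intro u hu
  by_contra hu0
  obtain ⟨C, hC, hpre⟩ := A.exists_preimage_norm_le_of_isClosed_range hcl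
  set κ := √(ε / 2)
  have hκ : 0 < κ := by positivity
  have hsmall : ∀ᶠ t : ℝ in 𝓝[>] 0, 0 < t ∧ t * (‖T‖ * C) < κ := by
    refine eventually_mem_nhdsWithin.and (Tendsto.eventually_lt_const (by simpa using hκ) ?_)
    simpa using ((continuous_mul_const (‖T‖ * C)).tendsto (0 : ℝ)).mono_left nhdsWithin_le_nhds
  obtain ⟨t, ⟨ht, htκ⟩, v, hv⟩ := (hsmall.and_frequently hfreq).exists
  set x := (↑v⁻¹ : X →L[𝕜] X) u
  have hx : (A + (t : 𝕜) • T) x = u := by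
    rw [← hv, ← mul_apply_eq_comp, v.mul_inv, one_apply_eq_self]
  obtain ⟨x', hx', hx'C⟩ := hpre x
  have hux := norm_sq_le_of_mem_orthogonal_range_sup_ker hT hu hx hx'
  rw [abs_of_pos ht] at hux
  have hAx : κ * ‖A x‖ ≤ ‖u‖ := by
    refine le_trans ?_ (hx ▸ sqrt_half_mul_le_norm_add_smul_apply hε1 hangle ht.le x)
    gcongr
    exact le_add_of_nonneg_right (by positivity)
  have : κ * ‖u‖ ^ 2 ≤ t * (‖T‖ * C) * ‖u‖ ^ 2 :=
    calc κ * ‖u‖ ^ 2 ≤ κ * (t * ‖T‖ * (C * ‖A x‖) * ‖u‖) := by gcongr; exact hux.trans (by gcongr)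
      _ = t * (‖T‖ * C) * (κ * ‖A x‖) * ‖u‖ := by ring
      _ ≤ t * (‖T‖ * C) * ‖u‖ * ‖u‖ := by gcongr
      _ = t * (‖T‖ * C) * ‖u‖ ^ 2 := by ring
  linarith [mul_lt_mul_of_pos_right htκ (by positivity : 0 < ‖u‖ ^ 2)]

end InnerProductSpace

end ContinuousLinearMap

theorem stmt_18 {X : Type*} [NormedAddCommGroup X] [InnerProductSpace ℂ X] [CompleteSpace X]
    (A : X →L[ℂ] X) (hcl : IsClosed (LinearMap.range (A : X →ₗ[ℂ] X) : Set X))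
    (T : X →L[ℂ] X)
    (hker : T '' (LinearMap.ker (A : X →ₗ[ℂ] X) : Set X) = (LinearMap.ker (A : X →ₗ[ℂ] X) : Set X))
    (t₀ : ℝ) (ht₀ : 0 < t₀) (hinv : IsUnit (A + (t₀ : ℂ) • T))
    (δ : ℝ) (hδ : 0 < δ)
    (h : ∀ x : X, A x ≠ 0 → T x ≠ 0 →
      (-1 + δ) * (‖A x‖ * ‖T x‖) ≤ (⟪A x, T x⟫_ℂ).re) :
    LinearMap.range (A : X →ₗ[ℂ] X) ⊔ LinearMap.ker (A : X →ₗ[ℂ] X) = ⊤ ∧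
      LinearMap.range (A : X →ₗ[ℂ] X) ⊓ LinearMap.ker (A : X →ₗ[ℂ] X) = ⊥ := by
  set ε := min δ 1
  have hε0 : 0 < ε := lt_min hδ one_pos
  have hε1 : ε ≤ 1 := min_le_right δ 1
  have hangle := ContinuousLinearMap.neg_one_add_min_one_mul_le_re_inner (𝕜 := ℂ) h
  have hκ : 0 < √(ε / 2) := by positivity
  have hsplit : ∀ z ∈ LinearMap.range (A : X →ₗ[ℂ] X), ∀ k ∈ LinearMap.ker (A : X →ₗ[ℂ] X),
      √(ε / 2) * (‖z‖ + ‖k‖) ≤ ‖z + k‖ := fun z hz k hk =>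
    ContinuousLinearMap.sqrt_half_mul_norm_add_norm_le_of_mem_range_of_mem_ker hε1 hangle
      hker.ge hz hk
  refine ⟨?_, Submodule.inf_eq_bot_of_mul_norm_add_norm_le hκ hsplit⟩
  have := hcl.completeSpace_coe
  have := A.isClosed_ker.completeSpace_coe
  have := (Submodule.isClosed_sup_of_mul_norm_add_norm_le hκ hsplit).completeSpace_coe
  obtain ⟨c, hc, hbound⟩ := ContinuousLinearMap.exists_pos_mul_mul_norm_le_add_smul hκ ht₀
    (fun t ht x => ContinuousLinearMap.sqrt_half_mul_le_norm_add_smul_apply hε1 hangle ht x) hinv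
  refine Submodule.orthogonal_eq_bot_iff.mp ?_
  exact ContinuousLinearMap.orthogonal_range_sup_ker_eq_bot hε0 hε1 hangle
    (Set.mapsTo_iff_image_subset.mpr hker.le) hcl
    (ContinuousLinearMap.frequently_isUnit_add_smul hc ht₀ hbound hinv)
end
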